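/- arXiv:2209.02770 — 10 statements merged into one kernel-verified Lean document; each statement's English description precedes it below -/
import Mathlib

section
/- Let A be a flexible not-necessarily-unital, not-necessarily-associative ring. Then for all a, b, c in A: (a∘b)∘c - a∘(b∘c) = 4(a,b,c) - J(a,b,c) - [[a,c],b], where ∘ is the circle product x∘y = x*y + y*x. -/
/-- The associator `(x,y,z) = (x*y)*z - x*(y*z)`. -/
def assoc {A : Type*} [NonUnitalNonAssocRing A] (x y z : A) : A :=
  x * y * z - x * (y * z)

/-- The commutator `[x,y] = x*y - y*x`. -/
def brk {A : Type*} [NonUnitalNonAssocRing A] (x y : A) : A :=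
  x * y - y * x

/-- The circle product `x∘y = x*y + y*x`. -/
def circ {A : Type*} [NonUnitalNonAssocRing A] (x y : A) : A :=
  x * y + y * x

/-- The Jacobian `J(a,b,c) = [[a,b],c] + [[b,c],a] + [[c,a],b]`. -/
def jac {A : Type*} [NonUnitalNonAssocRing A] (a b c : A) : A :=
  brk (brk a b) c + brk (brk b c) a + brk (brk c a) b

/-!
Expanding both sides, the identity holds in every nonassociative ring up to the error term
`2((a,b,c) + (c,b,a))`; linearizing flexibility `(x,y,x) = 0` at `x = a + c` shows that this
error term vanishes.
-/

section

variable {A : Type*} [NonUnitalNonAssocRing A]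

theorem assoc_add_assoc_swap (x y z : A) :
    assoc x y z + assoc z y x = assoc (x + z) y (x + z) - assoc x y x - assoc z y z := by
  simp only [assoc, add_mul, mul_add]
  abel

theorem assoc_swap_of_flexible (hflex : ∀ x y : A, assoc x y x = 0) (x y z : A) :
    assoc z y x = -assoc x y z := by
  have h := assoc_add_assoc_swap x y z
  rw [hflex, hflex, hflex, sub_zero, sub_zero] at h
  exact eq_neg_of_add_eq_zero_right h

theorem circ_assoc_eq (a b c : A) :
    circ (circ a b) c - circ a (circ b c) =
      4 • assoc a b c - jac a b c - brk (brk a c) b - 2 • (assoc a b c + assoc c b a) := by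
  simp only [assoc, circ, brk, jac, mul_add, add_mul, sub_mul, mul_sub]
  abel

end

/-- In a flexible ring, the associator of the circle product equals
`4(a,b,c) - J(a,b,c) - [[a,c],b]`. -/
theorem circ_assoc_eq_of_flexible {A : Type*} [NonUnitalNonAssocRing A]
    (hflex : ∀ x y : A, assoc x y x = 0) (a b c : A) :
    circ (circ a b) c - circ a (circ b c) =
      4 • assoc a b c - jac a b c - brk (brk a c) b := by
  rw [circ_assoc_eq, assoc_swap_of_flexible hflex a b c, add_neg_cancel, smul_zero, sub_zero]
end

section
/- (Proposition 3.0) Let A be a flexible not-necessarily-unital, not-necessarily-associative ring. Then the circle product x∘y = x*y + y*x is associative (i.e. (a∘b)∘c = a∘(b∘c) for all a,b,c) if and only if A satisfies the Kokoris identity J(a,b,c) = 4(a,b,c) - [[a,c],b] for all a, b, c in A. -/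
section

variable {A : Type*} [NonUnitalNonAssocRing A]

lemma assoc_add_assoc_swap_eq_zero (hflex : ∀ x y : A, assoc x y x = 0) (x y z : A) :
    assoc x y z + assoc z y x = 0 :=
  calc assoc x y z + assoc z y x
      = assoc (x + z) y (x + z) - assoc x y x - assoc z y z := by
        simp only [assoc, add_mul, mul_add]
        abel
    _ = 0 := by rw [hflex, hflex, hflex, sub_self, sub_zero]

lemma circ_circ_sub_circ_circ (a b c : A) :
    circ (circ a b) c - circ a (circ b c)
      = (4 • assoc a b c - brk (brk a c) b) - jac a b c
        - 2 • (assoc a b c + assoc c b a) := by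
  simp only [circ, assoc, brk, jac, mul_add, add_mul, mul_sub, sub_mul]
  abel

end

/-- Proposition 3.0: in a flexible ring, the circle product is associative
if and only if the Kokoris identity `J(a,b,c) = 4(a,b,c) - [[a,c],b]` holds. -/
theorem circ_assoc_iff_kokoris {A : Type*} [NonUnitalNonAssocRing A]
    (hflex : ∀ x y : A, assoc x y x = 0) :
    (∀ a b c : A, circ (circ a b) c = circ a (circ b c)) ↔
      (∀ a b c : A, jac a b c = 4 • assoc a b c - brk (brk a c) b) := by
  refine forall₃_congr fun a b c => ?_
  have defect : circ (circ a b) c - circ a (circ b c)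
      = (4 • assoc a b c - brk (brk a c) b) - jac a b c := by
    rw [circ_circ_sub_circ_circ, assoc_add_assoc_swap_eq_zero hflex, smul_zero, sub_zero]
  rw [← sub_eq_zero, defect, sub_eq_zero, eq_comm]
end

section
/- Let F be a field and A a unital not-necessarily-associative F-algebra that is flexible and quadratic over F, meaning that for every a in A there exist scalars t, n in F with a*a = t•a - n•1. Then A satisfies the Jordan identity: ((x*x)*y)*x = (x*x)*(y*x) for all x, y in A. (Every quadratic flexible algebra is a noncommutative Jordan algebra.) -/
theorem jordan_of_quadratic_flexible_general {F A : Type*} [Field F] [NonAssocRing A]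
    [Module F A] [IsScalarTower F A A]
    (hflex : ∀ x y : A, x * y * x = x * (y * x))
    (hquad : ∀ a : A, ∃ t n : F, a * a = t • a - n • (1 : A)) :
    ∀ x y : A, x * x * y * x = x * x * (y * x) := by
  intro x y
  obtain ⟨t, n, hx⟩ := hquad x
  simp only [hx, sub_mul, smul_mul_assoc, one_mul, hflex]

/-- Every quadratic flexible algebra satisfies the Jordan identity,
i.e. is a noncommutative Jordan algebra. -/
theorem jordan_of_quadratic_flexible {F A : Type*} [Field F] [NonAssocRing A]
    [Module F A] [SMulCommClass F A A] [IsScalarTower F A A]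
    (hflex : ∀ x y : A, x * y * x = x * (y * x))
    (hquad : ∀ a : A, ∃ t n : F, a * a = t • a - n • (1 : A)) :
    ∀ x y : A, x * x * y * x = x * x * (y * x) :=
  jordan_of_quadratic_flexible_general hflex hquad
end

section
/- Let F be a commutative ring, B an associative unital F-algebra, and λ an element of F. Define on B the mutated product x*y := λ•(x·y) + (1-λ)•(y·x). Then the product * is flexible, (x*y)*x = x*(y*x) for all x, y, and * satisfies the Jordan identity ((x*x)*y)*x = (x*x)*(y*x) for all x, y. (Every quasi-associative algebra B(λ) is a noncommutative Jordan algebra.) -/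
/-!
Write `L x` and `R x` for left and right multiplication by `x` in `B`. Associativity says exactly
that `L x` and `R x` commute, and `L (x * x) = (L x)²`, `R (x * x) = (R x)²`. In the mutation
`B(λ)` left and right multiplication by `x` are `λ L x + (1 - λ) R x` and `λ R x + (1 - λ) L x`,
and the mutated square `x * x` is the old one. So the operators occurring in flexibility
(`x`-left against `x`-right) and in the Jordan identity (`x²`-left against `x`-right) all lie in
the commutative algebra generated by `L x` and `R x`, hence commute.
-/

open LinearMap

section Mutation

variable {F B : Type*} [CommRing F] [NonUnitalRing B] [Module F B]
  [IsScalarTower F B B] [SMulCommClass F B B]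

def mutationMulLeft (l : F) (x : B) : Module.End F B :=
  l • mulLeft F x + (1 - l) • mulRight F x

def mutationMulRight (l : F) (x : B) : Module.End F B :=
  l • mulRight F x + (1 - l) • mulLeft F x

theorem mutationMulRight_apply (l : F) (x y : B) :
    mutationMulRight l x y = l • (y * x) + (1 - l) • (x * y) := rfl

theorem mutationMulLeft_mul_self (l : F) (x : B) :
    mutationMulLeft l (x * x) =
      l • (mulLeft F x * mulLeft F x) + (1 - l) • (mulRight F x * mulRight F x) := by
  rw [mutationMulLeft, mulLeft_mul, mulRight_mul]
  rfl

theorem commute_mulLeft_mutationMulRight (l : F) (x : B) :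
    Commute (mulLeft F x) (mutationMulRight l x) :=
  ((commute_mulLeft_right x x).smul_right l).add_right ((Commute.refl _).smul_right (1 - l))

theorem commute_mulRight_mutationMulRight (l : F) (x : B) :
    Commute (mulRight F x) (mutationMulRight l x) :=
  ((Commute.refl _).smul_right l).add_right ((commute_mulLeft_right x x).symm.smul_right (1 - l))

theorem commute_mutationMulLeft_mutationMulRight (l : F) (x : B) :
    Commute (mutationMulLeft l x) (mutationMulRight l x) :=
  ((commute_mulLeft_mutationMulRight l x).smul_left l).add_left
    ((commute_mulRight_mutationMulRight l x).smul_left (1 - l))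

theorem commute_mutationMulLeft_mul_self_mutationMulRight (l : F) (x : B) :
    Commute (mutationMulLeft l (x * x)) (mutationMulRight l x) := by
  have hL := commute_mulLeft_mutationMulRight l x
  have hR := commute_mulRight_mutationMulRight l x
  rw [mutationMulLeft_mul_self]
  exact ((hL.mul_left hL).smul_left l).add_left ((hR.mul_left hR).smul_left (1 - l))

theorem mutation_assoc_of_commute {star : B → B → B} {l : F}
    (hstar : ∀ x y : B, star x y = l • (x * y) + (1 - l) • (y * x)) {a b : B}
    (h : Commute (mutationMulLeft l a) (mutationMulRight l b)) (y : B) :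
    star (star a y) b = star a (star y b) := by
  have hL : ∀ x y, star x y = mutationMulLeft l x y := hstar
  have hR : ∀ x y, star x y = mutationMulRight l y x := fun x y => by
    rw [hstar, mutationMulRight_apply]
  rw [hR _ b, hL a y, hL a, hR y b]
  exact LinearMap.congr_fun h.eq.symm y

end Mutation

/-- Every quasi-associative algebra `B(λ)`, i.e. an associative algebra `B`
with the mutated product `x*y = λ•(x·y) + (1-λ)•(y·x)`, is flexible and
satisfies the Jordan identity: it is a noncommutative Jordan algebra. -/
theorem mutation_flexible_and_jordan {F B : Type*} [CommRing F] [Ring B] [Algebra F B]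
    (l : F) (star : B → B → B)
    (hstar : ∀ x y : B, star x y = l • (x * y) + (1 - l) • (y * x)) :
    (∀ x y : B, star (star x y) x = star x (star y x)) ∧
    (∀ x y : B, star (star (star x x) y) x = star (star x x) (star y x)) := by
  have hsq : ∀ x, star x x = x * x := fun x => by rw [hstar, smul_add_one_sub_smul]
  refine ⟨fun x y => ?_, fun x y => ?_⟩
  · exact mutation_assoc_of_commute hstar (commute_mutationMulLeft_mutationMulRight l x) y
  · rw [hsq]
    exact mutation_assoc_of_commute hstar
      (commute_mutationMulLeft_mul_self_mutationMulRight l x) y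
end

section
/- Let R be a commutative ring, A a commutative associative R-algebra, and β : A →ₗ[R] A →ₗ[R] A a bilinear bracket satisfying anticommutativity β(a,b) = -β(b,a) and the Leibniz identity β(a·b, c) = a·β(b,c) + b·β(a,c), i.e. (A, ·, β) is a generic Poisson algebra. Define the product a*b := a·b + β(a,b). Then: (i) * is flexible: (a*b)*a = a*(b*a) for all a, b; (ii) a*b + b*a = 2(a·b) for all a, b, so the circle product of * is associative; (iii) * satisfies the Kokoris identity J_*(a,b,c) = 4(a,b,c)_* - [[a,c]_*,b]_* for all a, b, c, where the associator, commutator and J are formed with the product *. (A generic Poisson algebra gives rise to a Kokoris algebra.) -/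
/-- The associator of a binary product `star`. -/
def sassoc {A : Type*} [Sub A] (star : A → A → A) (x y z : A) : A :=
  star (star x y) z - star x (star y z)

/-- The commutator of a binary product `star`. -/
def scomm {A : Type*} [Sub A] (star : A → A → A) (x y : A) : A :=
  star x y - star y x

/-- The Jacobian `J_*(a,b,c) = [[a,b]_*,c]_* + [[b,c]_*,a]_* + [[c,a]_*,b]_*`. -/
def sjac {A : Type*} [Add A] [Sub A] (star : A → A → A) (a b c : A) : A :=
  scomm star (scomm star a b) c + scomm star (scomm star b c) a
    + scomm star (scomm star c a) b

/-!
Anticommutativity of `β` makes the `*`-commutator `2β(a,b)` and the `*`-anticommutator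
`2ab`; together with the Leibniz rule it reduces the `*`-associator to
`(a,b,c)_* = β(β(a,b),c) + β(β(b,c),a)`. Flexibility and the Kokoris identity are then
identities among the iterated brackets `β(β(x,y),z)`, which are antisymmetric in `x, y`.
-/

section GenericPoisson

variable {R A : Type*} [CommSemiring R] [CommRing A] [Module R A] (β : A →ₗ[R] A →ₗ[R] A)

def poissonStar (a b : A) : A :=
  a * b + β a b

variable {β}

theorem bracket_bracket_swap (hanti : ∀ a b : A, β a b = -β b a) (x y z : A) :
    β (β x y) z = -β (β y x) z := by
  rw [hanti x y, map_neg, LinearMap.neg_apply]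

theorem bracket_mul_right (hanti : ∀ a b : A, β a b = -β b a)
    (hleib : ∀ a b c : A, β (a * b) c = a * β b c + b * β a c) (x y z : A) :
    β x (y * z) = y * β x z + z * β x y := by
  linear_combination hanti x (y * z) - hleib y z x - y * hanti x z - z * hanti x y

theorem poissonStar_add_poissonStar_swap (hanti : ∀ a b : A, β a b = -β b a) (a b : A) :
    poissonStar β a b + poissonStar β b a = 2 * (a * b) := by
  simp only [poissonStar]
  linear_combination hanti a b

theorem scomm_poissonStar (hanti : ∀ a b : A, β a b = -β b a) (x y : A) :
    scomm (poissonStar β) x y = 2 * β x y := by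
  simp only [scomm, poissonStar]
  linear_combination -hanti y x

theorem scomm_scomm_poissonStar (hanti : ∀ a b : A, β a b = -β b a) (x y z : A) :
    scomm (poissonStar β) (scomm (poissonStar β) x y) z = 4 * β (β x y) z := by
  rw [scomm_poissonStar hanti, scomm_poissonStar hanti, two_mul (β x y), map_add,
    LinearMap.add_apply]
  ring

theorem sassoc_poissonStar (hanti : ∀ a b : A, β a b = -β b a)
    (hleib : ∀ a b c : A, β (a * b) c = a * β b c + b * β a c) (x y z : A) :
    sassoc (poissonStar β) x y z = β (β x y) z + β (β y z) x := by
  simp only [sassoc, poissonStar, map_add, LinearMap.add_apply]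
  linear_combination hleib x y z - bracket_mul_right hanti hleib x y z - hanti x (β y z)

theorem poissonStar_flexible (hanti : ∀ a b : A, β a b = -β b a)
    (hleib : ∀ a b c : A, β (a * b) c = a * β b c + b * β a c) (a b : A) :
    poissonStar β (poissonStar β a b) a = poissonStar β a (poissonStar β b a) := by
  have hassoc : sassoc (poissonStar β) a b a = 0 := by
    rw [sassoc_poissonStar hanti hleib, bracket_bracket_swap hanti b a, add_neg_cancel]
  exact sub_eq_zero.mp hassoc

theorem sjac_poissonStar (hanti : ∀ a b : A, β a b = -β b a)
    (hleib : ∀ a b c : A, β (a * b) c = a * β b c + b * β a c) (a b c : A) :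
    sjac (poissonStar β) a b c =
      4 • sassoc (poissonStar β) a b c - scomm (poissonStar β) (scomm (poissonStar β) a c) b := by
  simp only [sjac, scomm_scomm_poissonStar hanti, sassoc_poissonStar hanti hleib,
    nsmul_eq_mul, Nat.cast_ofNat]
  linear_combination 4 * bracket_bracket_swap hanti c a b

end GenericPoisson

/-- A generic Poisson algebra `(A, ·, β)` gives rise to a Kokoris algebra via
`a*b = a·b + β(a,b)`: the product `*` is flexible, its circle product is twice
the commutative associative product, and the Kokoris identity holds. -/
theorem genericPoisson_gives_kokoris {R A : Type*} [CommRing R] [CommRing A] [Algebra R A]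
    (β : A →ₗ[R] A →ₗ[R] A)
    (hanti : ∀ a b : A, β a b = - β b a)
    (hleib : ∀ a b c : A, β (a * b) c = a * β b c + b * β a c)
    (star : A → A → A) (hstar : ∀ a b : A, star a b = a * b + β a b) :
    (∀ a b : A, star (star a b) a = star a (star b a)) ∧
    (∀ a b : A, star a b + star b a = 2 * (a * b)) ∧
    (∀ a b c : A,
      sjac star a b c = 4 • sassoc star a b c - scomm star (scomm star a c) b) := by
  obtain rfl : star = poissonStar β := funext₂ hstar
  exact ⟨poissonStar_flexible hanti hleib, poissonStar_add_poissonStar_swap hanti,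
    sjac_poissonStar hanti hleib⟩
end

section
/- Let A be a not-necessarily-unital, not-necessarily-associative ring that is a ℚ-algebra (i.e. a module over ℚ with scalar multiplication compatible with ring multiplication). If A is flexible and the circle product x∘y = x*y + y*x is associative, then A satisfies the Jordan identity ((x*x)*y)*x = (x*x)*(y*x) for all x, y. (A Kokoris algebra over a field of characteristic 0 is a noncommutative Jordan algebra.) -/
/-!
With `⁅a, b⁆ = a * b - b * a`, flexibility makes each `⁅z, ·⁆` a derivation of the circle
product and gives `⁅x * x, v⁆ = x ∘ ⁅x, v⁆`. Expanding both sides of `4 • (x², y, x)` with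
`2 a b = a ∘ b + ⁅a, b⁆` leaves an associator of `∘`, which vanishes by hypothesis, and three
differences of commutator terms, which cancel by these two facts because `x * x` commutes with `x`.
-/

section Flexible

variable {A : Type*} [NonUnitalNonAssocRing A]

theorem associator_add_associator_swap_eq_zero (hflex : ∀ x y : A, x * y * x = x * (y * x))
    (a b c : A) : associator a b c + associator c b a = 0 := by
  have h := hflex (a + c) b
  simp only [add_mul, mul_add, hflex] at h
  simp only [associator_apply]
  linear_combination (norm := abel) h

theorem lie_circ (hflex : ∀ x y : A, x * y * x = x * (y * x)) (z a b : A) :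
    ⁅z, circ a b⁆ = circ ⁅z, a⁆ b + circ a ⁅z, b⁆ := by
  have hzab := associator_add_associator_swap_eq_zero hflex z a b
  have hzba := associator_add_associator_swap_eq_zero hflex z b a
  have hazb := associator_add_associator_swap_eq_zero hflex a z b
  simp only [associator_apply] at hzab hzba hazb
  simp only [circ, Ring.lie_def, mul_add, add_mul, mul_sub, sub_mul]
  linear_combination (norm := abel) hazb - hzab - hzba

theorem circ_lie (hflex : ∀ x y : A, x * y * x = x * (y * x)) (a b z : A) :
    ⁅circ a b, z⁆ = circ ⁅a, z⁆ b + circ a ⁅b, z⁆ := by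
  have h := lie_circ hflex z a b
  simp only [circ, Ring.lie_def, mul_sub, sub_mul] at h ⊢
  linear_combination (norm := abel) -h

theorem lie_mul_self (hflex : ∀ x y : A, x * y * x = x * (y * x)) (x v : A) :
    ⁅x * x, v⁆ = circ x ⁅x, v⁆ := by
  have h := associator_add_associator_swap_eq_zero hflex x x v
  have hxvx := hflex x v
  simp only [associator_apply] at h
  simp only [circ, Ring.lie_def, mul_sub, sub_mul]
  linear_combination (norm := abel) h - hxvx

end Flexible

theorem four_smul_associator {A : Type*} [NonUnitalNonAssocRing A] (s y x : A) :
    4 • associator s y x =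
      (circ (circ s y) x - circ s (circ y x)) + (⁅circ s y, x⁆ - circ s ⁅y, x⁆)
        + (circ ⁅s, y⁆ x - ⁅s, circ y x⁆) + (⁅⁅s, y⁆, x⁆ - ⁅s, ⁅y, x⁆⁆) := by
  simp only [associator_apply, circ, Ring.lie_def, mul_add, add_mul, mul_sub, sub_mul]
  abel

theorem four_smul_associator_mul_self_left_eq_zero {A : Type*} [NonUnitalNonAssocRing A]
    (hflex : ∀ x y : A, x * y * x = x * (y * x))
    (hcirc : ∀ a b c : A, circ (circ a b) c = circ a (circ b c)) (x y : A) :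
    4 • associator (x * x) y x = 0 := by
  have hsx : ⁅x * x, x⁆ = 0 := by rw [Ring.lie_def, hflex]; exact sub_self _
  have hxx : ⁅x, x⁆ = 0 := by rw [Ring.lie_def, sub_self]
  have h₁ : ⁅circ (x * x) y, x⁆ = circ (x * x) ⁅y, x⁆ := by
    rw [circ_lie hflex, hsx]; simp [circ]
  have h₂ : ⁅x * x, circ y x⁆ = circ ⁅x * x, y⁆ x := by
    rw [lie_circ hflex, hsx]; simp [circ]
  have h₃ : ⁅⁅x * x, y⁆, x⁆ = ⁅x * x, ⁅y, x⁆⁆ := by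
    rw [lie_mul_self hflex, lie_mul_self hflex, circ_lie hflex, hxx]
    simp only [circ, Ring.lie_def, mul_sub, sub_mul, zero_mul, mul_zero]
    abel
  rw [four_smul_associator, hcirc, h₁, h₂, h₃]
  simp

theorem jordan_of_flexible_circAssoc_general {A : Type*} [NonUnitalNonAssocRing A]
    [Module ℚ A]
    (hflex : ∀ x y : A, x * y * x = x * (y * x))
    (hcirc : ∀ a b c : A, circ (circ a b) c = circ a (circ b c)) :
    ∀ x y : A, x * x * y * x = x * x * (y * x) := by
  intro x y
  rw [← sub_eq_zero, ← associator_apply]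
  calc associator (x * x) y x
      = (4 : ℚ)⁻¹ • (4 : ℕ) • associator (x * x) y x := by
        rw [← Nat.cast_smul_eq_nsmul ℚ, smul_smul]; norm_num
    _ = 0 := by rw [four_smul_associator_mul_self_left_eq_zero hflex hcirc, smul_zero]

/-- A Kokoris algebra over a field of characteristic 0 is a noncommutative
Jordan algebra: if `A` is a flexible ℚ-algebra whose circle product is
associative, then `A` satisfies the Jordan identity. -/
theorem jordan_of_flexible_circAssoc {A : Type*} [NonUnitalNonAssocRing A]
    [Module ℚ A] [SMulCommClass ℚ A A] [IsScalarTower ℚ A A]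
    (hflex : ∀ x y : A, x * y * x = x * (y * x))
    (hcirc : ∀ a b c : A, circ (circ a b) c = circ a (circ b c)) :
    ∀ x y : A, x * x * y * x = x * x * (y * x) :=
  jordan_of_flexible_circAssoc_general hflex hcirc
end

section
/- Let A be a flexible not-necessarily-unital, not-necessarily-associative ring that is a ℚ-algebra. Then A satisfies the Jordan identity ((x*x)*y)*x = (x*x)*(y*x) for all x, y if and only if the circle product x∘y = x*y + y*x satisfies the commutative Jordan identity ((a∘a)∘b)∘a = (a∘a)∘(b∘a) for all a, b. (A flexible algebra satisfies the Jordan identity if and only if the adjoint commutative algebra A^(+) is a Jordan algebra.) -/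
/-!
Expanding the circle products and using the linearized flexible law
`(u*y)*w + (w*y)*u = u*(y*w) + w*(y*u)` to move parentheses, the defect of the commutative Jordan
identity for `∘` is exactly `8` times the defect `((x*x)*y)*x - (x*x)*(y*x)` of the Jordan
identity. Since a `ℚ`-module has no additive torsion, one vanishes identically iff the other does.
-/

theorem flexible_linearized {A : Type*} [NonUnitalNonAssocRing A]
    (hflex : ∀ x y : A, x * y * x = x * (y * x)) (u y w : A) :
    u * y * w + w * y * u = u * (y * w) + w * (y * u) := by
  have h := hflex (u + w) y
  simp only [add_mul, mul_add] at h
  refine add_right_cancel (b := u * (y * u) + w * (y * w)) ?_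
  linear_combination (norm := abel) h - hflex u y - hflex w y

theorem circ_jordan_sub_eq_nsmul {A : Type*} [NonUnitalNonAssocRing A]
    (hflex : ∀ x y : A, x * y * x = x * (y * x)) (a b : A) :
    circ (circ (circ a a) b) a - circ (circ a a) (circ b a)
      = 8 • (a * a * b * a - a * a * (b * a)) := by
  have h1 := flexible_linearized hflex (a * a) b a
  have h2 := flexible_linearized hflex b (a * a) a
  have h3 := flexible_linearized hflex (a * a) a b
  have h4 := flexible_linearized hflex a a (a * b)
  have h5 := hflex a (b * a)
  have h6 := congrArg (· * a) (hflex a b)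
  have h7 := congrArg (· * b) (hflex a a)
  have h8 := congrArg (b * ·) (hflex a a)
  have h9 : a * (a * a * b) + a * (b * a * a) = a * (a * (a * b)) + a * (b * (a * a)) := by
    rw [← mul_add, ← mul_add, flexible_linearized hflex a a b]
  simp only [circ, add_mul, mul_add]
  linear_combination (norm := abel)
    (2 : ℤ) • (h2 + h7 + h8 - 3 • h1 - h3 - 2 • h4 + 2 • h5 + 2 • h6 + 2 • h9)

theorem jordan_iff_plus_jordan_general {A : Type*} [NonUnitalNonAssocRing A]
    [Module ℚ A]
    (hflex : ∀ x y : A, x * y * x = x * (y * x)) :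
    (∀ x y : A, x * x * y * x = x * x * (y * x)) ↔
      (∀ a b : A, circ (circ (circ a a) b) a = circ (circ a a) (circ b a)) := by
  have : IsAddTorsionFree A := .of_module_rat A
  refine forall₂_congr fun a b => ?_
  rw [← sub_eq_zero, ← sub_eq_zero (a := circ _ _), circ_jordan_sub_eq_nsmul hflex,
    smul_eq_zero_iff_right (by norm_num)]

/-- A flexible ℚ-algebra satisfies the Jordan identity if and only if its
adjoint commutative algebra `A⁽⁺⁾` (with the circle product) is a Jordan
algebra. -/
theorem jordan_iff_plus_jordan {A : Type*} [NonUnitalNonAssocRing A]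
    [Module ℚ A] [SMulCommClass ℚ A A] [IsScalarTower ℚ A A]
    (hflex : ∀ x y : A, x * y * x = x * (y * x)) :
    (∀ x y : A, x * x * y * x = x * x * (y * x)) ↔
      (∀ a b : A, circ (circ (circ a a) b) a = circ (circ a a) (circ b a)) :=
  jordan_iff_plus_jordan_general hflex
end

section
/- Let R be a commutative ring, A a commutative R-algebra, and D : A → A an R-linear derivation. If a in A satisfies D(D(a)) = 0, then for every natural number n, the n-fold iterate of D applied to a^n equals n! • (D a)^n, i.e. D^[n](a^n) = (n)! • (D a)^n. (This is the computation [⋯[u^i,y],…,y] = i![u,y]^i used in the proof of Theorem 3.4.) -/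
namespace Derivation

variable {R A : Type*} [CommSemiring R] [CommSemiring A] [Algebra R A]
  (D : Derivation R A A) {a : A}

theorem map_pow_mul_pow_of_map_map_eq_zero (h : D (D a) = 0) (m k : ℕ) :
    D (a ^ m * D a ^ k) = m • (a ^ (m - 1) * D a ^ (k + 1)) := by
  rw [leibniz, leibniz_pow D (D a), h, smul_zero, smul_zero, smul_zero, zero_add,
    leibniz_pow, smul_eq_mul, mul_smul_comm, pow_succ]
  ring

/-- For `k > n` the truncated `n - k` is harmless: `n.descFactorial k = 0`. -/
theorem iterate_map_pow_of_map_map_eq_zero (h : D (D a) = 0) (n k : ℕ) :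
    D^[k] (a ^ n) = n.descFactorial k • (a ^ (n - k) * D a ^ k) := by
  induction k with
  | zero => simp
  | succ k ih =>
    rw [Function.iterate_succ_apply', ih, map_nsmul, map_pow_mul_pow_of_map_map_eq_zero D h,
      smul_smul, Nat.descFactorial_succ, Nat.sub_sub, mul_comm]

end Derivation

/-- If `D` is a derivation of a commutative algebra and `D(D(a)) = 0`, then
`D^[n](aⁿ) = n! • (D a)ⁿ` for all `n`. -/
theorem iterate_derivation_pow {R A : Type*} [CommRing R] [CommRing A] [Algebra R A]
    (D : Derivation R A A) (a : A) (h : D (D a) = 0) :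
    ∀ n : ℕ, (⇑D)^[n] (a ^ n) = n.factorial • (D a) ^ n := by
  intro n
  rw [D.iterate_map_pow_of_map_map_eq_zero h, Nat.sub_self, pow_zero, one_mul,
    Nat.descFactorial_self]
end

section
/- (Lemma 3.3, monomial form) Let A be a type equipped with a multiplication. For every n ≥ 1 and every element w of the free magma on A whose length is at least 2^n, the evaluation of w in A (extending the identity map on generators) can be written as a₀ acted on by a chain of n multiplication operators: there exist a₀, b₁, …, bₙ in A and a choice ε₁, …, εₙ of sides (each 'left' or 'right') such that eval(w) = T_{bₙ}(⋯T_{b₂}(T_{b₁}(a₀))⋯), where T_{b}(u) = b*u if the corresponding side is 'left' and T_{b}(u) = u*b if it is 'right'. -/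
/-!
Write `w = u * v`. Since `length w = length u + length v ≥ 2 ^ (n + 1)`, one factor, say `u`,
has length at least `2 ^ n`; by induction `eval u` is a chain of `n` operators, and
`eval w = R_{eval v} (eval u)` extends it by one more. The same works with `L_{eval u}` when the
long factor is `v`.
-/

namespace FreeMagma

variable {A : Type*} [Mul A]

def sideMul (u : A) (p : Bool × A) : A :=
  if p.1 then p.2 * u else u * p.2

theorem exists_foldl_sideMul_of_two_pow_le_length (n : ℕ) (w : FreeMagma A)
    (hw : 2 ^ n ≤ w.length) :
    ∃ (a₀ : A) (l : List (Bool × A)), l.length = n ∧ lift id w = l.foldl sideMul a₀ := by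
  induction n generalizing w with
  | zero => exact ⟨lift id w, [], rfl, rfl⟩
  | succ n ih =>
    cases w with
    | of a =>
      have : 2 ≤ 2 ^ (n + 1) := Nat.le_self_pow n.succ_ne_zero 2
      simp only [length] at hw
      omega
    | mul u v =>
      have hsplit : 2 ^ n ≤ u.length ∨ 2 ^ n ≤ v.length := by
        simp only [length, pow_succ] at hw
        omega
      rcases hsplit with hu | hv
      · obtain ⟨a₀, l, hl, he⟩ := ih u hu
        refine ⟨a₀, l ++ [(false, lift id v)], by simp [hl], ?_⟩
        simp [List.foldl_append, sideMul, ← he]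
      · obtain ⟨a₀, l, hl, he⟩ := ih v hv
        refine ⟨a₀, l ++ [(true, lift id u)], by simp [hl], ?_⟩
        simp [List.foldl_append, sideMul, ← he]

end FreeMagma

/-- Lemma 3.3 (monomial form): every element of the free magma on `A` of
length at least `2ⁿ` evaluates in `A` to `a₀` acted on by a chain of `n`
left/right multiplication operators. -/
theorem eval_eq_chain_of_length_ge {A : Type*} [Mul A] :
    ∀ n : ℕ, 1 ≤ n → ∀ w : FreeMagma A, 2 ^ n ≤ w.length →
      ∃ (a₀ : A) (l : List (Bool × A)), l.length = n ∧
        FreeMagma.lift (id : A → A) w =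
          l.foldl (fun u p => if p.1 then p.2 * u else u * p.2) a₀ :=
  fun n _ w hw => FreeMagma.exists_foldl_sideMul_of_two_pow_le_length n w hw
end

section
/- (Lemma 3.4) Let F be a field of characteristic 0 and A a unital not-necessarily-associative F-algebra which is: simple (A is nontrivial and its only two-sided ideals are 0 and A); flexible ((x*y)*x = x*(y*x) for all x,y); quadratic over F (for every a in A there exist t, n in F with a*a = t•a - n•1); and which satisfies, for some fixed n ≥ 1 and m ≥ 1, the identities that the left-normed n-th power of every associator (x,y,z) is 0 and the left-normed m-th power of every commutator [x,y] is 0. Then A is commutative and associative, and the dimension of A over F is at most 2. -/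
/-- The left-normed `k`-th power: `a¹ = a`, `a^{k+1} = aᵏ * a`
(with the convention `a⁰ = a`). -/
def lnpow {A : Type*} [Mul A] (a : A) : ℕ → A
  | 0 => a
  | 1 => a
  | k + 2 => lnpow a (k + 1) * a

/-!
In a quadratic algebra `a² = T(a) a - N(a)` for a linear trace `T` with `T 1 = 2`, so
`A = F·1 ⊕ ker T`. A nilpotent element `c` has `c² = 0` and `T c = 0`, since its quadratic relation
must divide `Xᵐ`. Applied to commutators, this makes the trace form `T(x y)` symmetric, gives
`u v + v u = T(u v)` on `ker T`, and, together with flexibility, makes `T([x, y] z)` alternating.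
The radical of the trace form is then a two-sided ideal, hence zero by simplicity. Expanding
`T((u,u,w)²) = 0` for `u, w ∈ ker T` gives `T(u²) (T(u²) T(w²) - T(u w)²) = 0`, and a
nondegenerate symmetric form with this property lives on a space of dimension at most one. So
`A = span {1, e}`, and such an algebra is commutative and associative.
-/

open Polynomial Submodule

theorem Polynomial.eq_zero_of_X_sq_sub_C_mul_X_add_C_dvd_X_pow {R : Type*} [CommRing R]
    [IsDomain R] {t ν : R} {n : ℕ} (h : X ^ 2 - C t * X + C ν ∣ (X ^ n : R[X])) :
    t = 0 ∧ ν = 0 := by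
  have hmonic : (X ^ 2 - C t * X + C ν : R[X]).Monic := by monicity!
  obtain ⟨i, -, hi⟩ := (dvd_prime_pow prime_X n).mp h
  have hq := eq_of_monic_of_associated hmonic (monic_X_pow i) hi
  obtain rfl : i = 2 := by
    rw [← natDegree_X_pow (R := R) i, ← hq]
    compute_degree!
  have h1 := congrArg (coeff · 1) hq
  have h0 := congrArg (coeff · 0) hq
  simp [coeff_X_pow, coeff_X, coeff_C] at h1 h0
  exact ⟨h1, h0⟩

section Nilpotent

variable {F A : Type*} [Field F] [NonAssocRing A] [Module F A]

theorem exists_lnpow_succ_eq_and_dvd [IsScalarTower F A A] {c : A} {t ν : F}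
    (hc : c * c = t • c - ν • 1) (k : ℕ) :
    ∃ a b : F, lnpow c (k + 1) = a • c + b • (1 : A) ∧
      X ^ 2 - C t * X + C ν ∣ X ^ (k + 1) - (C a * X + C b) := by
  induction k with
  | zero => exact ⟨1, 0, by simp [lnpow], by simp⟩
  | succ k ih =>
    obtain ⟨a, b, hl, hd⟩ := ih
    refine ⟨a * t + b, -(a * ν), ?_, ?_⟩
    · rw [lnpow, hl, add_mul, smul_mul_assoc, smul_mul_assoc, one_mul, hc]
      module
    · have h : X ^ (k + 1 + 1) - (C (a * t + b) * X + C (-(a * ν))) =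
          X * (X ^ (k + 1) - (C a * X + C b)) + C a * (X ^ 2 - C t * X + C ν) := by
        simp only [map_add, map_mul, map_neg]; ring
      rw [h]
      exact dvd_add (dvd_mul_of_dvd_right hd _) (dvd_mul_left _ _)

variable [SMulCommClass F A A] [IsScalarTower F A A]

theorem lnpow_smul_one (μ : F) (k : ℕ) : lnpow (μ • (1 : A)) (k + 1) = μ ^ (k + 1) • (1 : A) := by
  induction k with
  | zero => simp [lnpow]
  | succ k ih => rw [lnpow, ih, smul_mul_smul_comm, one_mul, ← pow_succ]

variable [Nontrivial A]

theorem eq_zero_or_of_lnpow_eq_zero {c : A} {t ν : F} (hc : c * c = t • c - ν • 1) {m : ℕ}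
    (h : lnpow c m = 0) : c = 0 ∨ t = 0 ∧ ν = 0 := by
  obtain ⟨k, hk⟩ : ∃ k, lnpow c m = lnpow c (k + 1) :=
    ⟨m - 1, by rcases m with _ | _ | m <;> rfl⟩
  rw [hk] at h
  by_cases hs : c ∈ F ∙ (1 : A)
  · obtain ⟨μ, rfl⟩ := mem_span_singleton.mp hs
    rw [lnpow_smul_one, smul_eq_zero] at h
    simp_all
  · right
    obtain ⟨a, b, hl, hd⟩ := exists_lnpow_succ_eq_and_dvd hc k
    rw [hl] at h
    have ha : a = 0 := by
      by_contra ha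
      refine hs ((smul_mem_iff _ ha).mp ?_)
      rw [eq_neg_of_add_eq_zero_left h]
      exact neg_mem (smul_mem _ _ (mem_span_singleton_self _))
    rw [ha, zero_smul, zero_add, smul_eq_zero] at h
    have hb : b = 0 := h.resolve_right one_ne_zero
    simp only [ha, hb, map_zero, zero_mul, add_zero, sub_zero] at hd
    exact eq_zero_of_X_sq_sub_C_mul_X_add_C_dvd_X_pow hd

end Nilpotent

section Trace

variable {F A : Type*} [Field F] [NonAssocRing A] [Module F A]

theorem eq_of_mul_self_eq_of_notMem_span_one {a : A} (ha : a ∉ F ∙ (1 : A)) {t t' ν ν' : F}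
    (h : a * a = t • a - ν • 1) (h' : a * a = t' • a - ν' • 1) : t = t' := by
  by_contra hne
  refine ha ((smul_mem_iff _ (sub_ne_zero.mpr hne)).mp ?_)
  rw [show (t - t') • a = (ν - ν') • (1 : A) by linear_combination (norm := module) h.symm.trans h']
  exact smul_mem _ _ (mem_span_singleton_self _)

variable [SMulCommClass F A A] [IsScalarTower F A A]

theorem mul_self_smul_one_add_smul {a : A} {t ν : F} (h : a * a = t • a - ν • 1) (μ s : F) :
    (μ • (1 : A) + s • a) * (μ • 1 + s • a) =
      (2 * μ + s * t) • (μ • 1 + s • a) - (μ * μ + s * t * μ + s * s * ν) • (1 : A) := by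
  simp only [add_mul, mul_add, smul_mul_smul_comm, one_mul, mul_one, h]
  module

theorem trace_smul_one_add_smul {T : A → F} (hsq : ∀ a : A, ∃ ν : F, a * a = T a • a - ν • 1)
    (hscalar : ∀ (a : A) (μ : F), μ • 1 = a → T a = 2 * μ) (a : A) (μ s : F) :
    T (μ • 1 + s • a) = 2 * μ + s * T a := by
  obtain ⟨ν, ha⟩ := hsq a
  by_cases has : a ∈ F ∙ (1 : A)
  · obtain ⟨α, rfl⟩ := mem_span_singleton.mp has
    rw [hscalar _ α rfl, hscalar _ (μ + s * α) (by module)]; ring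
  by_cases hbs : μ • (1 : A) + s • a ∈ F ∙ (1 : A)
  · obtain ⟨κ, hκ⟩ := mem_span_singleton.mp hbs
    obtain rfl : s = 0 := by
      by_contra hs
      refine has ((smul_mem_iff _ hs).mp ?_)
      rw [show s • a = (κ - μ) • (1 : A) by rw [sub_smul, hκ]; abel]
      exact smul_mem _ _ (mem_span_singleton_self _)
    rw [hscalar _ μ (by module)]; ring
  obtain ⟨ν', hb⟩ := hsq (μ • 1 + s • a)
  exact eq_of_mul_self_eq_of_notMem_span_one hbs hb (mul_self_smul_one_add_smul ha μ s)

theorem trace_add [CharZero F] {T : A → F} (hsq : ∀ a : A, ∃ ν : F, a * a = T a • a - ν • 1)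
    (hscalar : ∀ (a : A) (μ : F), μ • 1 = a → T a = 2 * μ) (a b : A) :
    T (a + b) = T a + T b := by
  by_cases has : a ∈ F ∙ (1 : A)
  · obtain ⟨α, rfl⟩ := mem_span_singleton.mp has
    have h := trace_smul_one_add_smul hsq hscalar b α 1
    rw [one_smul] at h
    rw [h, hscalar _ α rfl]; ring
  by_cases hbs : b ∈ span F {1, a}
  · obtain ⟨β, γ, rfl⟩ := mem_span_pair.mp hbs
    rw [show a + (β • 1 + γ • a) = β • 1 + (1 + γ) • a by module,
      trace_smul_one_add_smul hsq hscalar, trace_smul_one_add_smul hsq hscalar]; ring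
  obtain ⟨ν₁, h₁⟩ := hsq a
  obtain ⟨ν₂, h₂⟩ := hsq b
  obtain ⟨ν₃, h₃⟩ := hsq (a + b)
  obtain ⟨ν₄, h₄⟩ := hsq (a - b)
  -- `(a + b)² + (a - b)² = 2 a² + 2 b²`, read off in the independent family `1, a, b`
  have hkey : (T (a + b) - T (a - b) - 2 * T b) • b =
      (ν₄ + ν₃ - 2 * ν₁ - 2 * ν₂) • (1 : A) + (2 * T a - T (a + b) - T (a - b)) • a := by
    have h : (a + b) * (a + b) + (a - b) * (a - b) = (2 : F) • (a * a) + (2 : F) • (b * b) := by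
      simp only [add_mul, mul_add, sub_mul, mul_sub]; module
    rw [h₁, h₂, h₃, h₄] at h
    linear_combination (norm := module) h
  have hb : T (a + b) - T (a - b) - 2 * T b = 0 := by
    by_contra hb
    refine hbs ((smul_mem_iff _ hb).mp ?_)
    rw [hkey]
    exact add_mem (smul_mem _ _ (subset_span (by simp))) (smul_mem _ _ (subset_span (by simp)))
  rw [hb, zero_smul] at hkey
  have ha : 2 * T a - T (a + b) - T (a - b) = 0 := by
    by_contra ha
    refine has ((smul_mem_iff _ ha).mp ?_)
    rw [eq_neg_of_add_eq_zero_right hkey.symm]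
    exact neg_mem (smul_mem _ _ (mem_span_singleton_self _))
  linear_combination (hb - ha) / 2

variable [Nontrivial A]

theorem exists_trace [CharZero F] (hquad : ∀ a : A, ∃ t ν : F, a * a = t • a - ν • 1) :
    ∃ T : A →ₗ[F] F, T 1 = 2 ∧ ∀ a : A, ∃ ν : F, a * a = T a • a - ν • 1 := by
  have hsmul_one_inj := smul_left_injective F (one_ne_zero (α := A))
  -- `t` is unique off `F ∙ 1`; on `F ∙ 1` it is pinned down as `2 μ`.
  have hex : ∀ a : A, ∃ t : F, (∃ ν : F, a * a = t • a - ν • 1) ∧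
      ∀ μ : F, μ • (1 : A) = a → t = 2 * μ := by
    intro a
    by_cases ha : a ∈ F ∙ (1 : A)
    · obtain ⟨μ, rfl⟩ := mem_span_singleton.mp ha
      refine ⟨2 * μ, ⟨μ * μ, ?_⟩, fun μ' h => by rw [hsmul_one_inj h]⟩
      rw [smul_mul_smul_comm, one_mul]; module
    · obtain ⟨t, ν, h⟩ := hquad a
      exact ⟨t, ⟨ν, h⟩, fun μ hμ => absurd (hμ ▸ smul_mem _ _ (mem_span_singleton_self _)) ha⟩
  choose T hsq hscalar using hex
  refine ⟨⟨⟨T, trace_add hsq hscalar⟩, fun s a => ?_⟩, ?_, hsq⟩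
  · simpa using trace_smul_one_add_smul hsq hscalar a 0 s
  · simpa using hscalar 1 1 (one_smul F 1)

theorem mul_self_eq_zero_and_trace_eq_zero_of_lnpow_eq_zero {T : A →ₗ[F] F}
    (hsq : ∀ a : A, ∃ ν : F, a * a = T a • a - ν • 1) {c : A} {m : ℕ} (h : lnpow c m = 0) :
    c * c = 0 ∧ T c = 0 := by
  obtain ⟨ν, hc⟩ := hsq c
  rcases eq_zero_or_of_lnpow_eq_zero hc h with rfl | ⟨ht, hν⟩
  · simp
  · simp [hc, ht, hν]

end Trace

section TraceForm

variable {F A : Type*} [Field F] [NonAssocRing A] [Module F A] {T : A →ₗ[F] F}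

theorem trace_mul_comm (hTc : ∀ x y : A, T (x * y - y * x) = 0) (x y : A) :
    T (x * y) = T (y * x) :=
  sub_eq_zero.mp (by rw [← map_sub, hTc])

theorem mul_self_mem_span_one (hsq : ∀ a : A, ∃ ν : F, a * a = T a • a - ν • 1) {v : A}
    (hv : T v = 0) : v * v ∈ F ∙ (1 : A) := by
  obtain ⟨ν, h⟩ := hsq v
  rw [h, hv, zero_smul, zero_sub, ← neg_smul]
  exact smul_mem _ _ (mem_span_singleton_self _)

theorem trace_commutator_mul_self (hTc : ∀ x y : A, T (x * y - y * x) = 0)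
    (hflex : ∀ x y : A, x * y * x = x * (y * x)) (x y : A) : T ((x * y - y * x) * x) = 0 := by
  rw [sub_mul, map_sub, hflex, trace_mul_comm hTc x, sub_self]

theorem trace_commutator_mul_cyclic (hTc : ∀ x y : A, T (x * y - y * x) = 0)
    (hflex : ∀ x y : A, x * y * x = x * (y * x)) (x y z : A) :
    T ((x * y - y * x) * z) = T ((y * z - z * y) * x) := by
  have h := trace_commutator_mul_self hTc hflex (x + z) y
  have hx := trace_commutator_mul_self hTc hflex x y
  have hz := trace_commutator_mul_self hTc hflex z y
  simp only [add_mul, mul_add, sub_mul, map_add, map_sub] at h hx hz ⊢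
  linear_combination h - hx - hz

section

variable [SMulCommClass F A A] [IsScalarTower F A A]

variable (T) in
def traceForm : LinearMap.BilinForm F A := (LinearMap.mul F A).compr₂ T

@[simp]
theorem traceForm_apply (x y : A) : traceForm T x y = T (x * y) := rfl

theorem traceForm_isSymm (hTc : ∀ x y : A, T (x * y - y * x) = 0) : (traceForm T).IsSymm :=
  ⟨trace_mul_comm hTc⟩

end

variable [CharZero F]

theorem trace_sub_smul_one_eq_zero (hT1 : T 1 = 2) (a : A) : T (a - (2⁻¹ * T a) • 1) = 0 := by
  rw [map_sub, map_smul, hT1, smul_eq_mul]; ring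

theorem eq_half_trace_smul_one (hT1 : T 1 = 2) {s : A} (hs : s ∈ F ∙ (1 : A)) :
    s = (2⁻¹ * T s) • 1 := by
  obtain ⟨κ, rfl⟩ := mem_span_singleton.mp hs
  rw [map_smul, hT1, smul_eq_mul]
  congr 1; ring

theorem mul_self_of_trace_eq_zero (hT1 : T 1 = 2)
    (hsq : ∀ a : A, ∃ ν : F, a * a = T a • a - ν • 1) {v : A} (hv : T v = 0) :
    v * v = (2⁻¹ * T (v * v)) • 1 :=
  eq_half_trace_smul_one hT1 (mul_self_mem_span_one hsq hv)

theorem mul_add_mul_of_trace_eq_zero (hT1 : T 1 = 2)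
    (hsq : ∀ a : A, ∃ ν : F, a * a = T a • a - ν • 1) (hTc : ∀ x y : A, T (x * y - y * x) = 0)
    {u v : A} (hu : T u = 0) (hv : T v = 0) : u * v + v * u = T (u * v) • 1 := by
  have hspan : u * v + v * u ∈ F ∙ (1 : A) := by
    have e : u * v + v * u = (u + v) * (u + v) - u * u - v * v := by
      simp only [add_mul, mul_add]; abel
    rw [e]
    exact sub_mem (sub_mem (mul_self_mem_span_one hsq (by rw [map_add, hu, hv, add_zero]))
      (mul_self_mem_span_one hsq hu)) (mul_self_mem_span_one hsq hv)
  rw [eq_half_trace_smul_one hT1 hspan, map_add, trace_mul_comm hTc v u]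
  congr 1; ring

theorem mul_eq_of_trace_eq_zero (hT1 : T 1 = 2)
    (hsq : ∀ a : A, ∃ ν : F, a * a = T a • a - ν • 1) (hTc : ∀ x y : A, T (x * y - y * x) = 0)
    {u v : A} (hu : T u = 0) (hv : T v = 0) :
    u * v = (2⁻¹ * T (u * v)) • 1 + (2⁻¹ : F) • (u * v - v * u) := by
  linear_combination (norm := module) (2⁻¹ : F) • mul_add_mul_of_trace_eq_zero hT1 hsq hTc hu hv

variable [SMulCommClass F A A] [IsScalarTower F A A]

theorem trace_mul_mul_eq_zero_of_forall_trace_mul_eq_zero (hT1 : T 1 = 2)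
    (hsq : ∀ a : A, ∃ ν : F, a * a = T a • a - ν • 1)
    (hTc : ∀ x y : A, T (x * y - y * x) = 0) (hflex : ∀ x y : A, x * y * x = x * (y * x))
    {x : A} (hx : ∀ y, T (x * y) = 0) (a y : A) : T (a * x * y) = 0 ∧ T (x * a * y) = 0 := by
  set v := a - (2⁻¹ * T a) • (1 : A)
  have hv : T v = 0 := trace_sub_smul_one_eq_zero hT1 a
  have hxv : x * v = -(v * x) := by
    refine eq_neg_of_add_eq_zero_right ?_
    rw [mul_add_mul_of_trace_eq_zero hT1 hsq hTc hv (by simpa using hx 1), trace_mul_comm hTc,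
      hx, zero_smul]
  -- `v x = ½ [v, x]`, and cyclicity brings `x` to the front, where it is orthogonal to everything
  have hvxy : T (v * x * y) = 0 := by
    have h : T ((v * x - x * v) * y) = 0 := by
      rw [trace_commutator_mul_cyclic hTc hflex, trace_commutator_mul_cyclic hTc hflex,
        trace_mul_comm hTc _ x, hx]
    rw [hxv, sub_neg_eq_add, add_mul, map_add] at h
    linear_combination h / 2
  have ha : a = (2⁻¹ * T a) • 1 + v := by simp [v]
  rw [ha]
  simp [add_mul, mul_add, smul_mul_assoc, mul_smul_comm, hx, hxv, hvxy]

theorem trace_mul_self_mul_sub_sq_eq_zero (hT1 : T 1 = 2)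
    (hsq : ∀ a : A, ∃ ν : F, a * a = T a • a - ν • 1) (hTc : ∀ x y : A, T (x * y - y * x) = 0)
    (hcsq : ∀ x y : A, (x * y - y * x) * (x * y - y * x) = 0)
    (hflex : ∀ x y : A, x * y * x = x * (y * x)) {u w : A} (hu : T u = 0) (hw : T w = 0)
    (hD : (u * u * w - u * (u * w)) * (u * u * w - u * (u * w)) = 0) :
    T (u * u) * (T (u * u) * T (w * w) - T (u * w) ^ 2) = 0 := by
  set c := u * w - w * u
  set z := u * c - c * u
  have huc : u * c = (2⁻¹ : F) • z := by
    rw [mul_eq_of_trace_eq_zero hT1 hsq hTc hu (hTc u w), trace_mul_comm hTc,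
      trace_commutator_mul_self hTc hflex, mul_zero, zero_smul, zero_add]
  have hD' : u * u * w - u * (u * w) =
      (2⁻¹ * T (u * u)) • w - (2⁻¹ * T (u * w)) • u - (4⁻¹ : F) • z := by
    conv_lhs => rw [mul_self_of_trace_eq_zero hT1 hsq hu, mul_eq_of_trace_eq_zero hT1 hsq hTc hu hw]
    rw [smul_mul_assoc, one_mul, mul_add, mul_smul_comm, mul_smul_comm, mul_one, huc]
    module
  have hzz : T (z * z) = 0 := by rw [hcsq u c, map_zero]
  have hzu : T (z * u) = 0 := trace_commutator_mul_self hTc hflex u c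
  have hzw : T (z * w) = 0 := by
    rw [trace_commutator_mul_cyclic hTc hflex, trace_commutator_mul_cyclic hTc hflex,
      show w * u - u * w = -c by simp [c], neg_mul, map_neg, hcsq u w, map_zero, neg_zero]
  have h := congrArg T hD
  rw [hD'] at h
  simp only [sub_mul, mul_sub, smul_mul_assoc, mul_smul_comm, map_sub, map_smul, smul_eq_mul,
    map_zero, trace_mul_comm hTc w u, trace_mul_comm hTc u z, trace_mul_comm hTc w z, hzz,
    hzu, hzw] at h
  linear_combination 4 * h

theorem eq_zero_of_forall_trace_mul_eq_zero
    (hsimple : ∀ S : AddSubgroup A, (∀ a ∈ S, ∀ x : A, x * a ∈ S ∧ a * x ∈ S) → S = ⊥ ∨ S = ⊤)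
    (hT1 : T 1 = 2) (hsq : ∀ a : A, ∃ ν : F, a * a = T a • a - ν • 1)
    (hTc : ∀ x y : A, T (x * y - y * x) = 0) (hflex : ∀ x y : A, x * y * x = x * (y * x))
    {x : A} (hx : ∀ y, T (x * y) = 0) : x = 0 := by
  set R := (LinearMap.ker (traceForm T)).toAddSubgroup
  have hmem : ∀ z, z ∈ R ↔ ∀ y, T (z * y) = 0 := fun z => by
    rw [Submodule.mem_toAddSubgroup, LinearMap.mem_ker, LinearMap.ext_iff]; rfl
  have hideal : ∀ a ∈ R, ∀ z : A, z * a ∈ R ∧ a * z ∈ R := fun a ha z => by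
    simp only [hmem] at ha ⊢
    have h := trace_mul_mul_eq_zero_of_forall_trace_mul_eq_zero hT1 hsq hTc hflex ha z
    exact ⟨(h · |>.1), (h · |>.2)⟩
  rcases hsimple R hideal with hbot | htop
  · have hxR := (hmem x).mpr hx
    rwa [hbot, AddSubgroup.mem_bot] at hxR
  · have h1 := (hmem 1).mp (by rw [htop]; exact AddSubgroup.mem_top 1) 1
    rw [mul_one, hT1] at h1
    exact absurd h1 two_ne_zero

theorem separatingLeft_traceForm_restrict_ker
    (hsimple : ∀ S : AddSubgroup A, (∀ a ∈ S, ∀ x : A, x * a ∈ S ∧ a * x ∈ S) → S = ⊥ ∨ S = ⊤)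
    (hT1 : T 1 = 2) (hsq : ∀ a : A, ∃ ν : F, a * a = T a • a - ν • 1)
    (hTc : ∀ x y : A, T (x * y - y * x) = 0) (hflex : ∀ x y : A, x * y * x = x * (y * x)) :
    ((traceForm T).restrict (LinearMap.ker T)).SeparatingLeft := fun u hu =>
  Subtype.ext <| eq_zero_of_forall_trace_mul_eq_zero hsimple hT1 hsq hTc hflex fun y => by
    have h := hu ⟨_, trace_sub_smul_one_eq_zero hT1 y⟩
    rwa [LinearMap.BilinForm.restrict_apply, LinearMap.domRestrict_apply, traceForm_apply,
      mul_sub, mul_smul_comm, mul_one, map_sub, map_smul, LinearMap.mem_ker.mp u.2, smul_zero,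
      sub_zero] at h

end TraceForm

namespace LinearMap.BilinForm

variable {F V : Type*} [Field F] [AddCommGroup V] [Module F V] {B : LinearMap.BilinForm F V}

theorem IsSymm.apply_eq_zero_of_forall_self_eq_zero [CharZero F] (hB : B.IsSymm)
    {W : Submodule F V} (hW : ∀ p ∈ W, B p p = 0) {p q : V} (hp : p ∈ W) (hq : q ∈ W) :
    B p q = 0 := by
  have h := hW (p + q) (W.add_mem hp hq)
  simp only [map_add, LinearMap.add_apply, hW p hp, hW q hq, hB.eq q p] at h
  linear_combination h / 2

theorem rank_le_one_of_mul_sub_sq_eq_zero [CharZero F] (hB : B.IsSymm) (hnd : B.SeparatingLeft)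
    (hrel : ∀ u w, B u u * (B u u * B w w - B u w ^ 2) = 0) : Module.rank F V ≤ 1 := by
  rw [rank_le_one_iff]
  by_cases hiso : ∀ u, B u u = 0
  · refine ⟨0, fun v => ⟨0, ?_⟩⟩
    rw [zero_smul, eq_comm]
    exact hnd v fun w => hB.apply_eq_zero_of_forall_self_eq_zero (W := ⊤) (fun p _ => hiso p)
      trivial trivial
  obtain ⟨e, he⟩ := not_forall.mp hiso
  -- `e` spans `V` because its orthogonal complement `ker (B e)` is totally isotropic
  have hperp : ∀ p ∈ LinearMap.ker (B e), B p p = 0 := fun p hp => by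
    have h := hrel e p
    rw [mem_ker.mp hp, sq, zero_mul, sub_zero, ← mul_assoc, mul_eq_zero] at h
    exact h.resolve_left (mul_ne_zero he he)
  have hproj : ∀ y, y - (B e y / B e e) • e ∈ LinearMap.ker (B e) := fun y => by
    rw [mem_ker, map_sub, map_smul, smul_eq_mul, div_mul_cancel₀ _ he, sub_self]
  have hker : ∀ p ∈ LinearMap.ker (B e), p = 0 := fun p hp => hnd p fun y => by
    have h := hB.apply_eq_zero_of_forall_self_eq_zero hperp hp (hproj y)
    rwa [map_sub, map_smul, smul_eq_mul, ← hB.eq e p, mem_ker.mp hp, mul_zero, sub_zero] at h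
  exact ⟨e, fun v => ⟨B e v / B e e, (sub_eq_zero.mp (hker _ (hproj v))).symm⟩⟩

end LinearMap.BilinForm

section SpanPair

variable {F A : Type*} [Field F]

theorem exists_span_pair_eq_top_of_rank_ker_le_one [AddCommGroup A] [Module F A]
    {T : A →ₗ[F] F} {a : A} (ha : T a ≠ 0) (h : Module.rank F (LinearMap.ker T) ≤ 1) :
    ∃ e : A, span F {a, e} = ⊤ := by
  obtain ⟨e, he⟩ := rank_le_one_iff.mp h
  refine ⟨e, eq_top_iff'.mpr fun x => mem_span_pair.mpr ?_⟩
  obtain ⟨r, hr⟩ := he ⟨x - (T x / T a) • a, by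
    rw [LinearMap.mem_ker, map_sub, map_smul, smul_eq_mul, div_mul_cancel₀ _ ha, sub_self]⟩
  refine ⟨T x / T a, r, ?_⟩
  rw [← Submodule.coe_smul, hr]
  module

theorem rank_le_two_of_span_pair_eq_top [AddCommGroup A] [Module F A] {a e : A}
    (h : span F {a, e} = ⊤) : Module.rank F A ≤ 2 := by
  calc Module.rank F A = Module.rank F (span F {a, e}) := by rw [h, rank_top]
    _ ≤ Cardinal.mk ({a, e} : Set A) := rank_span_le _
    _ ≤ 2 := Cardinal.mk_insert_le.trans (by simp [one_add_one_eq_two])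

variable [NonAssocRing A] [Module F A] [SMulCommClass F A A] [IsScalarTower F A A]

theorem mul_comm_of_span_one_pair_eq_top {e : A} (h : span F {1, e} = ⊤) (x y : A) :
    x * y = y * x := by
  obtain ⟨a, b, rfl⟩ := mem_span_pair.mp (h ▸ mem_top : x ∈ span F {1, e})
  obtain ⟨c, d, rfl⟩ := mem_span_pair.mp (h ▸ mem_top : y ∈ span F {1, e})
  simp only [add_mul, mul_add, smul_mul_smul_comm, one_mul, mul_one]
  module

theorem mul_assoc_of_span_one_pair_eq_top {e : A} (h : span F {1, e} = ⊤) (x y z : A) :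
    x * y * z = x * (y * z) := by
  obtain ⟨p, q, hee⟩ := mem_span_pair.mp (h ▸ mem_top : e * e ∈ span F {1, e})
  obtain ⟨a, b, rfl⟩ := mem_span_pair.mp (h ▸ mem_top : x ∈ span F {1, e})
  obtain ⟨c, d, rfl⟩ := mem_span_pair.mp (h ▸ mem_top : y ∈ span F {1, e})
  obtain ⟨f, g, rfl⟩ := mem_span_pair.mp (h ▸ mem_top : z ∈ span F {1, e})
  simp only [add_mul, mul_add, smul_mul_assoc, mul_smul_comm, one_mul, mul_one, ← hee]
  module

end SpanPair

theorem simple_quadratic_flexible_nil_assoc_comm_general {F A : Type*}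
    [Field F] [CharZero F] [NonAssocRing A]
    [Module F A] [SMulCommClass F A A] [IsScalarTower F A A]
    [Nontrivial A]
    (hsimple : ∀ S : AddSubgroup A,
      (∀ a ∈ S, ∀ x : A, x * a ∈ S ∧ a * x ∈ S) → S = ⊥ ∨ S = ⊤)
    (hflex : ∀ x y : A, x * y * x = x * (y * x))
    (hquad : ∀ a : A, ∃ t n : F, a * a = t • a - n • (1 : A))
    (n m : ℕ)
    (hassoc : ∀ x y z : A, lnpow (x * y * z - x * (y * z)) n = 0)
    (hcomm : ∀ x y : A, lnpow (x * y - y * x) m = 0) :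
    (∀ x y : A, x * y = y * x) ∧
    (∀ x y z : A, x * y * z = x * (y * z)) ∧
    Module.rank F A ≤ 2 := by
  obtain ⟨T, hT1, hsq⟩ := exists_trace hquad
  have hcsq x y := (mul_self_eq_zero_and_trace_eq_zero_of_lnpow_eq_zero hsq (hcomm x y)).1
  have hTc x y := (mul_self_eq_zero_and_trace_eq_zero_of_lnpow_eq_zero hsq (hcomm x y)).2
  have hker : Module.rank F (LinearMap.ker T) ≤ 1 := by
    refine LinearMap.BilinForm.rank_le_one_of_mul_sub_sq_eq_zero
      ((traceForm_isSymm hTc).restrict _)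
      (separatingLeft_traceForm_restrict_ker hsimple hT1 hsq hTc hflex) fun u w => ?_
    exact trace_mul_self_mul_sub_sq_eq_zero hT1 hsq hTc hcsq hflex u.2 w.2
      (mul_self_eq_zero_and_trace_eq_zero_of_lnpow_eq_zero hsq (hassoc u u w)).1
  obtain ⟨e, he⟩ := exists_span_pair_eq_top_of_rank_ker_le_one (by rw [hT1]; exact two_ne_zero) hker
  exact ⟨mul_comm_of_span_one_pair_eq_top he, mul_assoc_of_span_one_pair_eq_top he,
    rank_le_two_of_span_pair_eq_top he⟩

/-- Lemma 3.4: a simple flexible quadratic algebra over a field of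
characteristic 0 satisfying identities `(x,y,z)ⁿ = 0` and `[x,y]ᵐ = 0`
is commutative and associative of dimension at most 2. -/
theorem simple_quadratic_flexible_nil_assoc_comm {F A : Type*}
    [Field F] [CharZero F] [NonAssocRing A]
    [Module F A] [SMulCommClass F A A] [IsScalarTower F A A]
    [Nontrivial A]
    (hsimple : ∀ S : AddSubgroup A,
      (∀ a ∈ S, ∀ x : A, x * a ∈ S ∧ a * x ∈ S) → S = ⊥ ∨ S = ⊤)
    (hflex : ∀ x y : A, x * y * x = x * (y * x))
    (hquad : ∀ a : A, ∃ t n : F, a * a = t • a - n • (1 : A))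
    (n m : ℕ) (hn : 1 ≤ n) (hm : 1 ≤ m)
    (hassoc : ∀ x y z : A, lnpow (x * y * z - x * (y * z)) n = 0)
    (hcomm : ∀ x y : A, lnpow (x * y - y * x) m = 0) :
    (∀ x y : A, x * y = y * x) ∧
    (∀ x y z : A, x * y * z = x * (y * z)) ∧
    Module.rank F A ≤ 2 :=
  simple_quadratic_flexible_nil_assoc_comm_general hsimple hflex hquad n m hassoc hcomm
end
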